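/- arXiv:1306.1972 — 2 statements merged into one kernel-verified Lean document; each statement's English description precedes it below -/
import Mathlib

section
/- If G is a group of unitary n×n complex matrices such that rank(AB − BA) ≤ 1 for all A, B in G, then G is abelian. -/
/-!
For `A, B` in `G` the commutator `C = A B A⁻¹ B⁻¹` is unitary with determinant one, and
`C - 1 = (A B - B A) A⋆ B⋆` has rank at most one. Writing `C - 1 = v wᵀ`, the determinant
`det C = 1 + w ⬝ v` forces `w ⬝ v = 0`, so `N = C - 1` squares to zero. Unitarity of `1 + N`
reads `N⋆ N = -(N⋆ + N)`; multiplying by `N` on the right gives `N⋆ N = 0`, hence `N = 0`.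
-/

open Matrix
open scoped commutatorElement

namespace Matrix

variable {m n K R : Type*}

theorem exists_eq_vecMulVec_of_rank_le_one [Field K] [Fintype n] [DecidableEq n]
    {M : Matrix m n K} (h : M.rank ≤ 1) : ∃ (v : m → K) (w : n → K), M = vecMulVec v w := by
  obtain ⟨v, hv⟩ := finrank_le_one_iff.mp h
  choose c hc using fun j ↦ hv ⟨M *ᵥ Pi.single j 1, LinearMap.mem_range_self _ _⟩
  refine ⟨v, c, ext fun i j ↦ ?_⟩
  simpa [mulVec_single_one, vecMulVec_apply, mul_comm] using
    (congr_fun (congr_arg Subtype.val (hc j)) i).symm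

theorem mul_self_eq_zero_of_rank_le_one_of_det_one_add [Field K] [Fintype m] [DecidableEq m]
    {N : Matrix m m K} (hN : N.rank ≤ 1) (hdet : (1 + N).det = 1) : N * N = 0 := by
  obtain ⟨v, w, rfl⟩ := exists_eq_vecMulVec_of_rank_le_one hN
  have hwv : w ⬝ᵥ v = 0 := by
    rwa [vecMulVec_eq (Fin 1), det_one_add_replicateCol_mul_replicateRow, add_eq_left] at hdet
  rw [vecMulVec_mul_vecMulVec, hwv, zero_smul, vecMulVec_zero]

theorem eq_zero_of_mul_self_eq_zero_of_one_add_mem_unitary [PartialOrder R] [Ring R]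
    [StarRing R] [StarOrderedRing R] [NoZeroDivisors R] [Fintype m] [DecidableEq m]
    {N : Matrix m m R} (hN : N * N = 0) (hU : 1 + N ∈ unitary (Matrix m m R)) : N = 0 := by
  have hU' : (1 + Nᴴ) * (1 + N) = 1 := by
    simpa [star_eq_conjTranspose] using Unitary.star_mul_self_of_mem hU
  have hNN : Nᴴ * N = 0 :=
    calc Nᴴ * N = ((1 + Nᴴ) * (1 + N) - 1) * N - Nᴴ * (N * N) - N * N := by noncomm_ring
      _ = 0 := by rw [hU', hN]; simp
  exact conjTranspose_mul_self_eq_zero.mp hNN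

theorem eq_one_of_det_eq_one_of_rank_sub_one_le_one [Field R] [PartialOrder R] [StarRing R]
    [StarOrderedRing R] [Fintype m] [DecidableEq m] {U : Matrix m m R}
    (hU : U ∈ unitary (Matrix m m R)) (hdet : U.det = 1) (hrk : (U - 1).rank ≤ 1) : U = 1 := by
  rw [← add_sub_cancel 1 U] at hU hdet ⊢
  rw [eq_zero_of_mul_self_eq_zero_of_one_add_mem_unitary
    (mul_self_eq_zero_of_rank_le_one_of_det_one_add hrk hdet) hU, add_zero]

namespace UnitaryGroup

variable [CommRing R] [StarRing R] [Fintype m] [DecidableEq m]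

theorem det_commutatorElement (A B : unitaryGroup m R) :
    ((⁅A, B⁆ : unitaryGroup m R) : Matrix m m R).det = 1 := by
  have det_mul_star (C : unitaryGroup m R) : (C : Matrix m m R).det * (star C.1).det = 1 := by
    rw [← det_mul, Unitary.mul_star_self_of_mem C.2, det_one]
  simp only [commutatorElement_def, Submonoid.coe_mul, inv_val, det_mul]
  linear_combination (star B.1).det * B.1.det * det_mul_star A + det_mul_star B

theorem commutatorElement_sub_one (A B : unitaryGroup m R) :
    ((⁅A, B⁆ : unitaryGroup m R) : Matrix m m R) - 1
      = (A.1 * B.1 - B.1 * A.1) * (star A.1 * star B.1) := by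
  have hA := Unitary.mul_star_self_of_mem A.2
  have hB := Unitary.mul_star_self_of_mem B.2
  calc ((⁅A, B⁆ : unitaryGroup m R) : Matrix m m R) - 1
        = A.1 * B.1 * star A.1 * star B.1 - B.1 * 1 * star B.1 := by rw [mul_one, hB]; rfl
    _ = _ := by rw [← hA]; noncomm_ring

end UnitaryGroup

end Matrix

/-- If `G` is a group of unitary matrices with `rank (AB - BA) ≤ 1` for all `A, B ∈ G`,
then `G` is abelian. -/
theorem stmt1 (n : ℕ) (G : Subgroup (Matrix.unitaryGroup (Fin n) ℂ))
    (hr : ∀ A ∈ G, ∀ B ∈ G,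
      ((A : Matrix (Fin n) (Fin n) ℂ) * (B : Matrix (Fin n) (Fin n) ℂ)
        - (B : Matrix (Fin n) (Fin n) ℂ) * (A : Matrix (Fin n) (Fin n) ℂ)).rank ≤ 1) :
    ∀ A ∈ G, ∀ B ∈ G, A * B = B * A := by
  intro A hA B hB
  rw [← commutatorElement_eq_one_iff_mul_comm]
  open scoped ComplexOrder in
  refine Subtype.ext (eq_one_of_det_eq_one_of_rank_sub_one_le_one
    (⁅A, B⁆ : unitaryGroup (Fin n) ℂ).2 (UnitaryGroup.det_commutatorElement A B) ?_)
  rw [UnitaryGroup.commutatorElement_sub_one]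
  exact (rank_mul_le_left _ _).trans (hr A hA B hB)
end

section
/- Let T = diag(−1, 1, −1) and let S be the 3×3 cyclic permutation matrix. The group generated by T and S is irreducible (has no common nontrivial invariant subspace) and satisfies rank(AB − BA) ≤ 2 for all A, B in the group. -/
/-!
Both generators are real orthogonal matrices of determinant one, hence so is all of `G`.
For `A, B ∈ G` we have `AB - BA = AB (1 - C)` with `C = (AB)⁻¹ BA ∈ SO(3)`, and in odd dimension
`det (1 - C) = det (Cᵀ (1 - C)) = det (-(1 - C)ᵀ) = -det (1 - C)`, so the commutator is singular.

`G` is unitary and closed under inverses, so the orthogonal complement of a `G`-invariant subspace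
is again `G`-invariant. In `ℂ³` a proper nonzero invariant subspace therefore produces an invariant
line, i.e. a common eigenvector of `S` and `T`; but `S` permutes the coordinates cyclically while
`T` changes the sign of only two of them, which forces such a vector to vanish.
-/

open Matrix Module

theorem Matrix.rank_lt_card_of_det_eq_zero {n K : Type*} [Fintype n] [DecidableEq n] [Field K]
    {M : Matrix n n K} (h : M.det = 0) :
    M.rank < Fintype.card n := by
  obtain ⟨v, hv, hMv⟩ := exists_mulVec_eq_zero_iff.mpr h
  have hker : finrank K (LinearMap.ker M.mulVecLin) ≠ 0 :=
    Submodule.finrank_eq_zero.not.mpr <| (Submodule.ne_bot_iff _).mpr ⟨v, hMv, hv⟩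
  have := LinearMap.finrank_range_add_finrank_ker M.mulVecLin
  rw [finrank_fintype_fun_eq_card] at this
  rw [rank]
  omega

theorem Matrix.det_one_sub_eq_zero_of_transpose_mul_self_eq_one {n R : Type*} [Fintype n]
    [DecidableEq n] [CommRing R] [NoZeroDivisors R] [CharZero R] (hn : Odd (Fintype.card n))
    {X : Matrix n n R} (hX : Xᵀ * X = 1) (hdet : X.det = 1) : (1 - X).det = 0 := by
  have key : Xᵀ * (1 - X) = -(1 - X)ᵀ := by
    rw [mul_sub, hX, mul_one, transpose_sub, transpose_one, neg_sub]
  have := congrArg det key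
  rw [det_mul, det_transpose, hdet, one_mul, det_neg, det_transpose, hn.neg_one_pow,
    neg_one_mul] at this
  exact CharZero.eq_neg_self_iff.mp this

/-- `SO(n)` inside `U(n)`: the condition `Xᴴ = Xᵀ` says that `X` has real entries. -/
def Matrix.realSpecialUnitaryGroup (n : Type*) [Fintype n] [DecidableEq n] :
    Subgroup (unitaryGroup n ℂ) where
  carrier := {X | (X : Matrix n n ℂ)ᴴ = (X : Matrix n n ℂ)ᵀ ∧ (X : Matrix n n ℂ).det = 1}
  mul_mem' {X Y} hX hY := by
    simp only [Set.mem_ofPred_eq, UnitaryGroup.mul_val, conjTranspose_mul, transpose_mul, det_mul,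
      hX.1, hY.1, hX.2, hY.2, one_mul, and_self]
  one_mem' := by simp
  inv_mem' {X} hX := by
    simp only [Set.mem_ofPred_eq, UnitaryGroup.inv_val, star_eq_conjTranspose]
    rw [conjTranspose_conjTranspose, hX.1, transpose_transpose, det_transpose, hX.2]
    exact ⟨rfl, rfl⟩

theorem Matrix.mem_realSpecialUnitaryGroup_iff {n : Type*} [Fintype n] [DecidableEq n]
    {X : unitaryGroup n ℂ} :
    X ∈ realSpecialUnitaryGroup n ↔
      (X : Matrix n n ℂ)ᴴ = (X : Matrix n n ℂ)ᵀ ∧ (X : Matrix n n ℂ).det = 1 :=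
  Iff.rfl

namespace Matrix.realSpecialUnitaryGroup

variable {n : Type*} [Fintype n] [DecidableEq n]

theorem transpose_mul_self {X : unitaryGroup n ℂ} (hX : X ∈ realSpecialUnitaryGroup n) :
    (X : Matrix n n ℂ)ᵀ * X = 1 := by
  rw [← hX.1, ← star_eq_conjTranspose, UnitaryGroup.star_mul_self]

theorem rank_commutator_lt_card (hn : Odd (Fintype.card n)) {A B : unitaryGroup n ℂ}
    (hA : A ∈ realSpecialUnitaryGroup n) (hB : B ∈ realSpecialUnitaryGroup n) :
    ((A : Matrix n n ℂ) * B - B * A).rank < Fintype.card n := by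
  set C := (A * B)⁻¹ * (B * A)
  have hC : C ∈ realSpecialUnitaryGroup n := mul_mem (inv_mem (mul_mem hA hB)) (mul_mem hB hA)
  have hBA : (B * A : Matrix n n ℂ) = A * B * C := by
    rw [← UnitaryGroup.mul_val, ← UnitaryGroup.mul_val, ← UnitaryGroup.mul_val, mul_inv_cancel_left]
  apply rank_lt_card_of_det_eq_zero
  rw [hBA, ← mul_one_sub, det_mul,
    det_one_sub_eq_zero_of_transpose_mul_self_eq_one hn (transpose_mul_self hC) hC.2, mul_zero]

end Matrix.realSpecialUnitaryGroup

theorem Submodule.orthogonal_map_le_of_map_adjoint_le {𝕜 E : Type*} [RCLike 𝕜]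
    [NormedAddCommGroup E] [InnerProductSpace 𝕜 E] [FiniteDimensional 𝕜 E] {W : Submodule 𝕜 E}
    {f : E →ₗ[𝕜] E} (h : W.map f.adjoint ≤ W) : Wᗮ.map f ≤ Wᗮ := by
  rintro _ ⟨u, hu, rfl⟩
  rw [mem_orthogonal]
  intro x hx
  rw [← LinearMap.adjoint_inner_left]
  exact hu _ (h ⟨x, hx, rfl⟩)

theorem Matrix.UnitaryGroup.orthogonal_map_le_of_forall_map_le {𝕜 n : Type*} [RCLike 𝕜]
    [Fintype n] [DecidableEq n] {G : Subgroup (unitaryGroup n 𝕜)}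
    {W : Submodule 𝕜 (EuclideanSpace 𝕜 n)}
    (hW : ∀ X ∈ G, W.map (toEuclideanLin (X : Matrix n n 𝕜)) ≤ W) :
    ∀ X ∈ G, Wᗮ.map (toEuclideanLin (X : Matrix n n 𝕜)) ≤ Wᗮ := fun X hX =>
  Submodule.orthogonal_map_le_of_map_adjoint_le <| by
    rw [← toEuclideanLin_conjTranspose_eq_adjoint, ← star_eq_conjTranspose, ← inv_val]
    exact hW _ (inv_mem hX)

theorem Submodule.eq_bot_or_eq_top_of_finrank_ne_one {𝕜 E : Type*} [RCLike 𝕜]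
    [NormedAddCommGroup E] [InnerProductSpace 𝕜 E] [FiniteDimensional 𝕜 E]
    (hE : finrank 𝕜 E ≤ 3) {W : Submodule 𝕜 E} (hW : finrank 𝕜 W ≠ 1)
    (hW' : finrank 𝕜 Wᗮ ≠ 1) : W = ⊥ ∨ W = ⊤ := by
  have := W.finrank_add_finrank_orthogonal
  rcases Nat.eq_zero_or_pos (finrank 𝕜 W) with h | h
  · exact .inl (finrank_eq_zero.mp h)
  · exact .inr (orthogonal_eq_bot_iff.mp (finrank_eq_zero.mp (by omega)))

theorem Submodule.exists_ne_zero_forall_eq_smul_of_finrank_eq_one {K V : Type*} [Field K]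
    [AddCommGroup V] [Module K V] {W : Submodule K V} (hW : finrank K W = 1) :
    ∃ v ∈ W, v ≠ 0 ∧ ∀ f : V →ₗ[K] V, W.map f ≤ W → ∃ c : K, f v = c • v := by
  obtain ⟨v, hv, hspan⟩ := finrank_eq_one_iff'.mp hW
  refine ⟨v, v.2, fun h => hv (Subtype.ext h), fun f hf => ?_⟩
  obtain ⟨c, hc⟩ := hspan ⟨f v, hf ⟨v, v.2, rfl⟩⟩
  exact ⟨c, (congrArg Subtype.val hc).symm⟩

/-- The permutation matrix sending `eⱼ` to `eⱼ₊₁` (indices mod `n`). -/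
def Matrix.cyclicShift (n : ℕ) [NeZero n] (R : Type*) [Zero R] [One R] :
    Matrix (Fin n) (Fin n) R :=
  of fun i j => if i = j + 1 then 1 else 0

theorem Matrix.cyclicShift_mulVec {n : ℕ} [NeZero n] {R : Type*} [NonAssocSemiring R]
    (v : Fin n → R) (i : Fin n) : (cyclicShift n R *ᵥ v) i = v (i - 1) := by
  simp [cyclicShift, mulVec, dotProduct, eq_comm (a := i), ← eq_sub_iff_add_eq]

theorem Matrix.cyclicShift_conjTranspose {n : ℕ} [NeZero n] {R : Type*} [Semiring R]
    [StarRing R] :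
    (cyclicShift n R)ᴴ = (cyclicShift n R)ᵀ := by
  ext i j
  simp only [cyclicShift, conjTranspose_apply, transpose_apply, of_apply]
  split_ifs <;> simp

theorem Matrix.det_cyclicShift_three {R : Type*} [CommRing R] : (cyclicShift 3 R).det = 1 := by
  simp [det_fin_three, cyclicShift]

theorem Matrix.eq_zero_of_mulVec_eq_smul_of_mulVec_eq_smul {K : Type*} [Field K] [CharZero K]
    {v : Fin 3 → K} {c d : K} (hT : diagonal ![-1, 1, -1] *ᵥ v = c • v)
    (hS : cyclicShift 3 K *ᵥ v = d • v) : v = 0 := by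
  have hT i := congrFun hT i
  have hS i := congrFun hS i
  simp only [mulVec_diagonal, cyclicShift_mulVec, Pi.smul_apply, smul_eq_mul] at hT hS
  have t0 : -v 0 = c * v 0 := by simpa using hT 0
  have t1 : v 1 = c * v 1 := by simpa using hT 1
  have s0 : v 0 = d * v 1 := hS 1
  have s1 : v 1 = d * v 2 := hS 2
  have s2 : v 2 = d * v 0 := hS 0
  have hv1 : v 1 = 0 := by
    by_contra hv1
    have hc : c = 1 := (mul_left_eq_self₀.mp t1.symm).resolve_right hv1
    have hv0 : v 0 = 0 := CharZero.neg_eq_self_iff.mp (by rw [t0, hc, one_mul])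
    have hd : d = 0 := (mul_eq_zero.mp (s0 ▸ hv0)).resolve_right hv1
    exact hv1 (by rw [s1, hd, zero_mul])
  have hv0 : v 0 = 0 := by rw [s0, hv1, mul_zero]
  have hv2 : v 2 = 0 := by rw [s2, hv0, mul_zero]
  ext i
  fin_cases i <;> assumption

theorem EuclideanSpace.finrank_ne_one_of_map_le {𝕜 : Type*} [RCLike 𝕜]
    {W : Submodule 𝕜 (EuclideanSpace 𝕜 (Fin 3))}
    (hT : W.map (toEuclideanLin (diagonal ![-1, 1, -1])) ≤ W)
    (hS : W.map (toEuclideanLin (cyclicShift 3 𝕜)) ≤ W) : finrank 𝕜 W ≠ 1 := by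
  intro hW
  obtain ⟨v, -, hv, hv_eig⟩ := W.exists_ne_zero_forall_eq_smul_of_finrank_eq_one hW
  obtain ⟨c, hc⟩ := hv_eig _ hT
  obtain ⟨d, hd⟩ := hv_eig _ hS
  exact hv (WithLp.ofLp_injective _
    (eq_zero_of_mulVec_eq_smul_of_mulVec_eq_smul (congrArg WithLp.ofLp hc)
      (congrArg WithLp.ofLp hd)))

/-- The group generated by `T = diag (-1, 1, -1)` and the `3 × 3` cyclic permutation `S`
is irreducible and satisfies `rank (AB - BA) ≤ 2` for all its members. -/
theorem stmt13 (TU SU : Matrix.unitaryGroup (Fin 3) ℂ)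
    (hT : (TU : Matrix (Fin 3) (Fin 3) ℂ) = Matrix.diagonal ![-1, 1, -1])
    (hS : (SU : Matrix (Fin 3) (Fin 3) ℂ)
      = Matrix.of fun i j : Fin 3 => if i = j + 1 then (1 : ℂ) else 0)
    (G : Subgroup (Matrix.unitaryGroup (Fin 3) ℂ)) (hG : G = Subgroup.closure {TU, SU}) :
    (∀ W : Submodule ℂ (EuclideanSpace ℂ (Fin 3)),
      (∀ X ∈ G, W.map (Matrix.toEuclideanLin (X : Matrix (Fin 3) (Fin 3) ℂ)) ≤ W) →
      W = ⊥ ∨ W = ⊤) ∧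
    (∀ A ∈ G, ∀ B ∈ G,
      ((A : Matrix (Fin 3) (Fin 3) ℂ) * (B : Matrix (Fin 3) (Fin 3) ℂ)
        - (B : Matrix (Fin 3) (Fin 3) ℂ) * (A : Matrix (Fin 3) (Fin 3) ℂ)).rank ≤ 2) := by
  replace hS : (SU : Matrix (Fin 3) (Fin 3) ℂ) = cyclicShift 3 ℂ := hS
  have hTG : TU ∈ G := hG ▸ Subgroup.subset_closure (Set.mem_insert _ _)
  have hSG : SU ∈ G := hG ▸ Subgroup.subset_closure (Set.mem_insert_of_mem _ rfl)
  refine ⟨fun W hW => ?_, fun A hA B hB => ?_⟩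
  · have hline (U : Submodule ℂ (EuclideanSpace ℂ (Fin 3)))
        (hU : ∀ X ∈ G, U.map (toEuclideanLin (X : Matrix (Fin 3) (Fin 3) ℂ)) ≤ U) :
        finrank ℂ U ≠ 1 :=
      EuclideanSpace.finrank_ne_one_of_map_le (hT ▸ hU TU hTG) (hS ▸ hU SU hSG)
    exact Submodule.eq_bot_or_eq_top_of_finrank_ne_one (by simp) (hline W hW)
      (hline _ (UnitaryGroup.orthogonal_map_le_of_forall_map_le hW))
  · have hTSO : TU ∈ realSpecialUnitaryGroup (Fin 3) := by
      rw [mem_realSpecialUnitaryGroup_iff, hT]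
      refine ⟨?_, by simp [det_diagonal, Fin.prod_univ_three]⟩
      ext i j
      fin_cases i <;> fin_cases j <;> simp
    have hSSO : SU ∈ realSpecialUnitaryGroup (Fin 3) := by
      rw [mem_realSpecialUnitaryGroup_iff, hS]
      exact ⟨cyclicShift_conjTranspose, det_cyclicShift_three⟩
    have hSO : G ≤ realSpecialUnitaryGroup (Fin 3) := by
      rw [hG, Subgroup.closure_le, Set.insert_subset_iff, Set.singleton_subset_iff]
      exact ⟨hTSO, hSSO⟩
    exact Nat.le_of_lt_succ
      (realSpecialUnitaryGroup.rank_commutator_lt_card (by decide) (hSO hA) (hSO hB))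
end
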